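/- arXiv:2602.07868 — 7 statements merged into one kernel-verified Lean document; each statement's English description precedes it below -/
import Mathlib

section
/- Let T be a finite tree with n vertices and let s be an integer with 1 ≤ s ≤ n and s ≤ n. Then T can be partitioned into edge-disjoint subtrees T₁, ..., T_p such that every edge of T belongs to exactly one subtree and each subtree T_j has between s and 3s − 1 vertices. -/
/-!
If a subtree `S` has at least `3s` vertices, it contains a subtree `A` with `s ≤ |A| < 2s`
that meets the rest of `S` in a single vertex `v`. Such an `A` is found by shrinking: while a
pendant subtree `A` hanging from `v` has at least `2s` vertices, let `C` be the branch of
`A \ {v}` through a neighbour `w` of `v`. Acyclicity makes `C` hang from `w`, so either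
`|C| ≥ s` and we continue with `C`, or `|C| < s` and we continue with `A \ C`, which still
hangs from `v` and has more than `s` vertices. Cutting `A \ {v}` off `S` leaves a subtree with at
least `s + 2` vertices, which is split by induction. For `s = 1`, where
cutting off a part would not shrink `S`, the edges themselves are the parts.
-/

namespace SimpleGraph

variable {V : Type*} {G : SimpleGraph V}

def ReachableWithin (G : SimpleGraph V) (D : Set V) (x y : V) : Prop :=
  ∃ p : G.Walk x y, ∀ z ∈ p.support, z ∈ D

namespace ReachableWithin

variable {D : Set V} {x y z : V}

lemma mem_right (h : G.ReachableWithin D x y) : y ∈ D :=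
  h.elim fun p hp => hp y p.end_mem_support

lemma refl (hx : x ∈ D) : G.ReachableWithin D x x :=
  ⟨.nil, by simpa using hx⟩

lemma symm (h : G.ReachableWithin D x y) : G.ReachableWithin D y x := by
  obtain ⟨p, hp⟩ := h
  exact ⟨p.reverse, by simpa using hp⟩

lemma trans (h : G.ReachableWithin D x y) (h' : G.ReachableWithin D y z) :
    G.ReachableWithin D x z := by
  obtain ⟨p, hp⟩ := h
  obtain ⟨q, hq⟩ := h'
  refine ⟨p.append q, fun u hu => ?_⟩
  rcases (Walk.mem_support_append_iff _ _).1 hu with hu | hu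
  exacts [hp u hu, hq u hu]

lemma of_adj (hxy : G.Adj x y) (hx : x ∈ D) (hy : y ∈ D) : G.ReachableWithin D x y :=
  ⟨hxy.toWalk, by simp [hx, hy]⟩

lemma reachableWithin_setOf (h : G.ReachableWithin D x y) :
    G.ReachableWithin {z | G.ReachableWithin D x z} x y := by
  classical
  obtain ⟨p, hp⟩ := h
  exact ⟨p, fun u hu =>
    ⟨p.takeUntil u hu, fun z hz => hp z (p.support_takeUntil_subset_support hu hz)⟩⟩

lemma sdiff {S K : Set V} {v : V}
    (hK : ∀ a ∈ K, ∀ b ∈ S, G.Adj a b → b ≠ v → b ∈ K) (hx : x ∉ K)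
    (h : G.ReachableWithin S x v) : G.ReachableWithin (S \ K) x v := by
  obtain ⟨p, hp⟩ := h
  induction p with
  | nil => exact .refl ⟨hp _ (by simp), hx⟩
  | @cons x y v hxy q ih =>
    by_cases hxv : x = v
    · subst hxv
      exact .refl ⟨hp _ (by simp), hx⟩
    have hy : y ∉ K := fun hy => hx (hK y hy x (hp x (by simp)) hxy.symm hxv)
    exact (of_adj (D := S \ K) hxy ⟨hp x (by simp), hx⟩ ⟨hp y (by simp), hy⟩).trans
      (ih hK hy fun z hz => hp z (by simp [hz]))

end ReachableWithin

lemma induce_connected_of_reachableWithin {D : Set V} {v : V} (hv : v ∈ D)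
    (h : ∀ x ∈ D, G.ReachableWithin D v x) : (G.induce D).Connected := by
  refine (connected_iff_exists_forall_reachable _).2 ⟨⟨v, hv⟩, fun ⟨x, hx⟩ => ?_⟩
  obtain ⟨p, hp⟩ := h x hx
  exact ⟨p.induce D hp⟩

lemma Connected.reachableWithin {D : Set V} (h : (G.induce D).Connected) {x y : V}
    (hx : x ∈ D) (hy : y ∈ D) : G.ReachableWithin D x y := by
  obtain ⟨p⟩ := h.preconnected ⟨x, hx⟩ ⟨y, hy⟩
  refine ⟨p.map (Embedding.induce D).toHom, fun z hz => ?_⟩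
  erw [Walk.support_map] at hz
  obtain ⟨z', -, rfl⟩ := List.mem_map.1 hz
  exact z'.2

/-- Otherwise the walk and the edges `vw`, `va` would close a cycle. -/
lemma IsAcyclic.eq_of_adj_of_reachableWithin (hG : G.IsAcyclic) {D : Set V} {v w a : V}
    (hvw : G.Adj v w) (hva : G.Adj v a) (hv : v ∉ D) (h : G.ReachableWithin D w a) : a = w := by
  obtain ⟨p, hp⟩ := h
  have hbridge := isBridge_iff_forall_walk_mem_edges.1
    (isAcyclic_iff_forall_adj_isBridge.1 hG hvw) (.cons hva p.reverse)
  rw [Walk.edges_cons, List.mem_cons] at hbridge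
  rcases hbridge with hwa | hvp
  · exact (Sym2.congr_right.1 hwa).symm
  · exact absurd (hp v (by simpa using p.reverse.fst_mem_support_of_mem_edges hvp)) hv

structure IsPendant (G : SimpleGraph V) (S A : Set V) (v : V) : Prop where
  subset : A ⊆ S
  root_mem : v ∈ A
  connected : (G.induce A).Connected
  adj_mem : ∀ x ∈ A, x ≠ v → ∀ y ∈ S, G.Adj x y → y ∈ A

def branch (G : SimpleGraph V) (A : Set V) (v w : V) : Set V :=
  {z | G.ReachableWithin (A \ {v}) w z}

section Pendant

variable {S A : Set V} {v w : V}

lemma branch_subset : G.branch A v w ⊆ A \ {v} := fun _ hz => hz.mem_right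

lemma mem_branch_of_adj {z y : V} (hz : z ∈ G.branch A v w) (hy : y ∈ A) (hyv : y ≠ v)
    (hzy : G.Adj z y) : y ∈ G.branch A v w :=
  ReachableWithin.trans hz (.of_adj hzy (branch_subset hz) ⟨hy, hyv⟩)

lemma IsPendant.exists_adj_root (hA : G.IsPendant S A v) {x : V} (hx : x ∈ A) (hxv : x ≠ v) :
    ∃ w ∈ A, G.Adj v w := by
  obtain ⟨p, hp⟩ := hA.connected.reachableWithin hA.root_mem hx
  cases p with
  | nil => exact absurd rfl hxv
  | cons hvw q => exact ⟨_, hp _ (by simp), hvw⟩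

lemma IsPendant.branch (hG : G.IsAcyclic) (hA : G.IsPendant S A v) (hw : w ∈ A)
    (hvw : G.Adj v w) : G.IsPendant S (G.branch A v w) w where
  subset := fun _ hz => hA.subset (branch_subset hz).1
  root_mem := .refl ⟨hw, hvw.ne'⟩
  connected := induce_connected_of_reachableWithin (.refl ⟨hw, hvw.ne'⟩)
    fun _ hz => ReachableWithin.reachableWithin_setOf hz
  adj_mem := by
    intro a ha haw b hb hab
    have hbA : b ∈ A := hA.adj_mem a (branch_subset ha).1 (branch_subset ha).2 b hb hab
    refine mem_branch_of_adj ha hbA (fun hbv => haw ?_) hab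
    subst hbv
    exact hG.eq_of_adj_of_reachableWithin hvw hab.symm (fun h => h.2 rfl) ha

lemma IsPendant.sdiff_branch (hA : G.IsPendant S A v) : G.IsPendant S (A \ G.branch A v w) v where
  subset := Set.sdiff_subset.trans hA.subset
  root_mem := ⟨hA.root_mem, fun h => (branch_subset h).2 rfl⟩
  connected := by
    refine induce_connected_of_reachableWithin ⟨hA.root_mem, fun h => (branch_subset h).2 rfl⟩
      fun x hx => ReachableWithin.symm ?_
    refine ReachableWithin.sdiff (fun a ha b hb hab hbv => ?_) hx.2
      (hA.connected.reachableWithin hx.1 hA.root_mem)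
    exact mem_branch_of_adj ha hb hbv hab
  adj_mem := by
    intro a ha hav b hb hab
    refine ⟨hA.adj_mem a ha.1 hav b hb hab, fun hbC => ha.2 ?_⟩
    exact mem_branch_of_adj hbC ha.1 hav hab.symm

lemma IsPendant.connected_sdiff (hA : G.IsPendant S A v) (hS : (G.induce S).Connected) :
    (G.induce (S \ (A \ {v}))).Connected := by
  have hv : v ∈ S \ (A \ {v}) := ⟨hA.subset hA.root_mem, fun h => h.2 rfl⟩
  refine induce_connected_of_reachableWithin hv fun x hx => ReachableWithin.symm ?_
  refine ReachableWithin.sdiff (fun a ha b hb hab hbv => ?_) hx.2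
    (hS.reachableWithin hx.1 hv.1)
  exact ⟨hA.adj_mem a ha.1 ha.2 b hb hab, hbv⟩

theorem IsPendant.exists_isPendant_ncard_lt [Finite V] (hG : G.IsAcyclic) {s : ℕ} (hs : 0 < s)
    (hA : G.IsPendant S A v) (hsA : s ≤ A.ncard) :
    ∃ A' v', G.IsPendant S A' v' ∧ s ≤ A'.ncard ∧ A'.ncard < 2 * s := by
  induction hn : A.ncard using Nat.strong_induction_on generalizing A v with
  | _ n ih =>
  by_cases hsmall : n < 2 * s
  · exact ⟨A, v, hA, hn ▸ hsA, hn ▸ hsmall⟩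
  obtain ⟨x, hx, hxv⟩ := Set.exists_ne_of_one_lt_ncard (by omega : 1 < A.ncard) v
  obtain ⟨w, hw, hvw⟩ := hA.exists_adj_root hx hxv
  have hwC : w ∈ G.branch A v w := .refl ⟨hw, hvw.ne'⟩
  have hCA : G.branch A v w ⊆ A := branch_subset.trans Set.sdiff_subset
  have hCn : (G.branch A v w).ncard < n := by
    rw [← hn]
    exact Set.ncard_lt_ncard
      (hCA.ssubset_of_mem_notMem hA.root_mem fun h => (branch_subset h).2 rfl)
  by_cases hsC : s ≤ (G.branch A v w).ncard
  · exact ih _ hCn (hA.branch hG hw hvw) hsC rfl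
  · have hC0 : 0 < (G.branch A v w).ncard := (Set.ncard_pos).2 ⟨w, hwC⟩
    have hAC : (A \ G.branch A v w).ncard = n - (G.branch A v w).ncard := by
      rw [Set.ncard_sdiff hCA, hn]
    exact ih _ (by omega) (hA.sdiff_branch (w := w)) (by omega) rfl

end Pendant

structure IsSubtreeDecomposition (G : SimpleGraph V) (S : Set V) {p : ℕ} (A : Fin p → Set V) :
    Prop where
  connected : ∀ j, (G.induce (A j)).Connected
  subset : ∀ j, A j ⊆ S
  existsUnique_adj : ∀ x ∈ S, ∀ y ∈ S, G.Adj x y → ∃! j, x ∈ A j ∧ y ∈ A j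

namespace IsSubtreeDecomposition

lemma single {S : Set V} (hS : (G.induce S).Connected) :
    G.IsSubtreeDecomposition S fun _ : Fin 1 => S where
  connected _ := hS
  subset _ := subset_rfl
  existsUnique_adj _ hx _ hy _ := ⟨0, ⟨hx, hy⟩, fun j _ => Subsingleton.elim j 0⟩

lemma cons {S A : Set V} {v : V} {p : ℕ} {B : Fin p → Set V} (hA : G.IsPendant S A v)
    (hB : G.IsSubtreeDecomposition (S \ (A \ {v})) B) :
    G.IsSubtreeDecomposition S (Fin.cons A B : Fin (p + 1) → Set V) where
  connected j := by
    cases j using Fin.cases with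
    | zero => exact hA.connected
    | succ i => exact hB.connected i
  subset j := by
    cases j using Fin.cases with
    | zero => exact hA.subset
    | succ i => exact (hB.subset i).trans Set.sdiff_subset
  existsUnique_adj x hx y hy hxy := by
    by_cases hcut : x ∈ A \ {v} ∨ y ∈ A \ {v}
    · have hxyA : x ∈ A ∧ y ∈ A := by
        rcases hcut with hx' | hy'
        · exact ⟨hx'.1, hA.adj_mem x hx'.1 hx'.2 y hy hxy⟩
        · exact ⟨hA.adj_mem y hy'.1 hy'.2 x hx hxy.symm, hy'.1⟩
      refine ⟨0, by simpa using hxyA, fun j hj => ?_⟩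
      cases j using Fin.cases with
      | zero => rfl
      | succ i =>
        simp only [Fin.cons_succ] at hj
        rcases hcut with hx' | hy'
        exacts [absurd hx' (hB.subset i hj.1).2, absurd hy' (hB.subset i hj.2).2]
    · rw [not_or] at hcut
      obtain ⟨i, hi, huniq⟩ := hB.existsUnique_adj x ⟨hx, hcut.1⟩ y ⟨hy, hcut.2⟩ hxy
      refine ⟨i.succ, by simpa using hi, fun j hj => ?_⟩
      cases j using Fin.cases with
      | zero =>
        simp only [Fin.cons_zero] at hj
        have hxv : x = v := by_contra fun h => hcut.1 ⟨hj.1, h⟩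
        have hyv : y = v := by_contra fun h => hcut.2 ⟨hj.2, h⟩
        exact absurd (hxv.trans hyv.symm) hxy.ne
      | succ j =>
        simp only [Fin.cons_succ] at hj
        rw [huniq j hj]

end IsSubtreeDecomposition

theorem IsAcyclic.exists_isSubtreeDecomposition [Finite V] (hG : G.IsAcyclic) {s : ℕ}
    (hs : 2 ≤ s) {S : Set V} (hS : (G.induce S).Connected) (hsS : s ≤ S.ncard) :
    ∃ (p : ℕ) (A : Fin p → Set V), G.IsSubtreeDecomposition S A ∧
      ∀ j, s ≤ (A j).ncard ∧ (A j).ncard < 3 * s := by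
  induction hn : S.ncard using Nat.strong_induction_on generalizing S with
  | _ n ih =>
  by_cases hsmall : n < 3 * s
  · exact ⟨1, fun _ => S, .single hS, fun _ => ⟨hn ▸ hsS, hn ▸ hsmall⟩⟩
  obtain ⟨r, hr⟩ := hS.nonempty
  have hSS : G.IsPendant S S r := ⟨subset_rfl, hr, hS, fun _ _ _ _ hy _ => hy⟩
  obtain ⟨A, v, hA, hsA, hA2s⟩ :=
    hSS.exists_isPendant_ncard_lt hG (by omega) hsS
  have hAv : (A \ {v}).ncard = A.ncard - 1 := Set.ncard_sdiff_singleton_of_mem hA.root_mem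
  have hB : (S \ (A \ {v})).ncard = n - (A.ncard - 1) := by
    rw [Set.ncard_sdiff (Set.sdiff_subset.trans hA.subset), hAv, hn]
  obtain ⟨p, B, hBdec, hBsize⟩ :=
    ih _ (by omega) (hA.connected_sdiff hS) (by omega) rfl
  refine ⟨p + 1, Fin.cons A B, hBdec.cons hA, fun j => ?_⟩
  cases j using Fin.cases with
  | zero => exact ⟨hsA, by simp only [Fin.cons_zero]; omega⟩
  | succ i => exact hBsize i

theorem exists_isSubtreeDecomposition_edges [Finite V] :
    ∃ (p : ℕ) (A : Fin p → Set V), G.IsSubtreeDecomposition Set.univ A ∧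
      ∀ j, (A j).ncard = 2 := by
  let e := Finite.equivFin G.edgeSet
  have hpair : ∀ j, ∃ x y, G.Adj x y ∧ {z | z ∈ (e.symm j : Sym2 V)} = {x, y} := by
    intro j
    generalize e.symm j = f
    obtain ⟨f, hf⟩ := f
    induction f with
    | h x y => exact ⟨x, y, hf, by ext; simp⟩
  refine ⟨_, fun j => {z | z ∈ (e.symm j : Sym2 V)}, ⟨fun j => ?_, fun _ => Set.subset_univ _,
    fun x _ y _ hxy => ⟨e ⟨s(x, y), hxy⟩, by simp only [Equiv.symm_apply_apply]; simp,
      fun j hj => e.symm_apply_eq.1 (Subtype.ext ((Sym2.mem_and_mem_iff hxy.ne).1 hj))⟩⟩,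
    fun j => ?_⟩
  · obtain ⟨x, y, hxy, hj⟩ := hpair j
    rw [hj]
    exact induce_pair_connected_of_adj hxy
  · obtain ⟨x, y, hxy, hj⟩ := hpair j
    dsimp only
    rw [hj, Set.ncard_pair hxy.ne]

lemma IsAcyclic.isTree_coe_induce_top (hG : G.IsAcyclic) {A : Set V}
    (hA : (G.induce A).Connected) : ((⊤ : G.Subgraph).induce A).coe.IsTree := by
  rw [← induce_eq_coe_induce_top]
  exact ⟨hA, hG.induce A⟩

end SimpleGraph

theorem tree_partition_general {V : Type*} [Fintype V] (G : SimpleGraph V)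
    (hG : G.IsTree) (n s : ℕ) (hn : n = Fintype.card V)
    (hs1 : 1 ≤ s) (hsn : s ≤ n) :
    ∃ (p : ℕ) (T : Fin p → G.Subgraph),
      (∀ j, (T j).coe.IsTree) ∧
      (∀ e ∈ G.edgeSet, ∃! j, e ∈ (T j).edgeSet) ∧
      (∀ j, s ≤ (T j).verts.ncard ∧ (T j).verts.ncard < 3 * s) := by
  obtain ⟨p, A, hA, hsize⟩ : ∃ (p : ℕ) (A : Fin p → Set V),
      G.IsSubtreeDecomposition Set.univ A ∧ ∀ j, s ≤ (A j).ncard ∧ (A j).ncard < 3 * s := by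
    rcases hs1.eq_or_lt with rfl | hs2
    · obtain ⟨p, A, hA, hsize⟩ := G.exists_isSubtreeDecomposition_edges
      exact ⟨p, A, hA, fun j => by simp [hsize j]⟩
    · refine hG.isAcyclic.exists_isSubtreeDecomposition hs2
        ((G.induceUnivIso).connected_iff.2 hG.connected) ?_
      rwa [Set.ncard_univ, Nat.card_eq_fintype_card, ← hn]
  refine ⟨p, fun j => (⊤ : G.Subgraph).induce (A j),
    fun j => hG.isAcyclic.isTree_coe_induce_top (hA.connected j), fun e he => ?_, hsize⟩
  induction e with
  | h x y =>
    rw [SimpleGraph.mem_edgeSet] at he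
    simpa only [SimpleGraph.Subgraph.mem_edgeSet, SimpleGraph.Subgraph.induce_adj,
      SimpleGraph.Subgraph.top_adj, he, and_true]
      using hA.existsUnique_adj x trivial y trivial he

/-- Tree partition: a finite tree with `n ≥ 2` vertices can be partitioned into
edge-disjoint subtrees (connected subgraphs) `T₁, …, T_p` such that every edge of
`T` lies in exactly one subtree and each subtree has between `s` and `3s − 1` vertices. -/
theorem tree_partition {V : Type*} [Fintype V] (G : SimpleGraph V)
    (hG : G.IsTree) (n s : ℕ) (hn : n = Fintype.card V) (hn2 : 2 ≤ n)
    (hs1 : 1 ≤ s) (hsn : s ≤ n) :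
    ∃ (p : ℕ) (T : Fin p → G.Subgraph),
      (∀ j, (T j).coe.IsTree) ∧
      (∀ e ∈ G.edgeSet, ∃! j, e ∈ (T j).edgeSet) ∧
      (∀ j, s ≤ (T j).verts.ncard ∧ (T j).verts.ncard < 3 * s) :=
  tree_partition_general G hG n s hn hs1 hsn
end

section
/- Suppose (X, Y) is a frontier for Target(B, S) and Y is nonempty with min_{y ∈ Y} d[y] < B. Then the vertex y* ∈ Y attaining the minimum distance label in Y is complete, i.e., d[y*] = dis(y*); consequently d_B[Y] = dis_B(Y). -/
/-! Every `y ∈ Y` is covered, via the frontier property, by a complete `y' ∈ Y` with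
`dis y' ≤ dis y`. Hence the minimum label `d y*` over `Y` is at most every distance in `Y`;
since also `dis y* ≤ d y*`, the vertex `y*` is complete and attains the minimum of both `d` and
`dis` over `Y`, so the two truncated minima agree. -/

def Target {V : Type*} (dis : V → ℝ) (P : V → V → Prop) (B : ℝ) (S : Set V) : Set V :=
  {v | dis v < B ∧ ∃ u ∈ S, P v u}

def IsFrontier {V : Type*} (dis : V → ℝ) (P : V → V → Prop) (d : V → ℝ)
    (B : ℝ) (S X Y : Set V) : Prop :=
  ∀ v ∈ Target dis P B S, (v ∈ X ∧ d v = dis v) ∨ ∃ y ∈ Y, P v y ∧ d y = dis y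

theorem Finset.min'_insert_image_of_isMinOn {α β : Type*} [LinearOrder β]
    {s : Finset α} {f : α → β} {a : α} (ha : a ∈ s) (hmin : IsMinOn f s a) (b : β) :
    (insert b (s.image f)).min' (insert_nonempty _ _) = min b (f a) := by
  have himage : (s.image f).min' ⟨f a, mem_image_of_mem f ha⟩ = f a :=
    le_antisymm (min'_le _ _ (mem_image_of_mem f ha))
      (le_min' _ _ _ (by simpa using fun x hx => isMinOn_iff.1 hmin x hx))
  rw [min'_insert _ _ ⟨f a, mem_image_of_mem f ha⟩, himage, min_comm]

namespace IsFrontier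

variable {V : Type*} {dis : V → ℝ} {P : V → V → Prop} {d : V → ℝ} {B : ℝ} {S X Y : Set V}

theorem exists_complete_dis_le (hf : IsFrontier dis P d B S X Y)
    (hmono : ∀ v u, P v u → dis u ≤ dis v) (hYsub : Y ⊆ Target dis P B S) {y : V} (hy : y ∈ Y) :
    ∃ y' ∈ Y, d y' = dis y' ∧ dis y' ≤ dis y := by
  rcases hf y (hYsub hy) with ⟨-, hcomp⟩ | ⟨y', hy', hP, hcomp⟩
  · exact ⟨y, hy, hcomp, le_rfl⟩
  · exact ⟨y', hy', hcomp, hmono y y' hP⟩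

theorem le_dis_of_isMinOn (hf : IsFrontier dis P d B S X Y)
    (hmono : ∀ v u, P v u → dis u ≤ dis v) (hYsub : Y ⊆ Target dis P B S) {ystar : V}
    (hmin : IsMinOn d Y ystar) {y : V} (hy : y ∈ Y) : d ystar ≤ dis y := by
  obtain ⟨y', hy', hcomp, hle⟩ := hf.exists_complete_dis_le hmono hYsub hy
  calc d ystar ≤ d y' := isMinOn_iff.1 hmin y' hy'
    _ = dis y' := hcomp
    _ ≤ dis y := hle

theorem label_eq_dis_of_isMinOn (hf : IsFrontier dis P d B S X Y) (hge : ∀ v, dis v ≤ d v)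
    (hmono : ∀ v u, P v u → dis u ≤ dis v) (hYsub : Y ⊆ Target dis P B S) {ystar : V}
    (hy : ystar ∈ Y) (hmin : IsMinOn d Y ystar) : d ystar = dis ystar :=
  le_antisymm (hf.le_dis_of_isMinOn hmono hYsub hmin hy) (hge ystar)

end IsFrontier

theorem min_label_complete_general {V : Type*}
    (dis : V → ℝ) (P : V → V → Prop) (d : V → ℝ) (B : ℝ) (S X : Set V)
    (Y : Finset V) (ystar : V)
    (hge : ∀ v, dis v ≤ d v)
    (hmono : ∀ v u, P v u → dis u ≤ dis v)
    (hYsub : ↑Y ⊆ Target dis P B S)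
    (hf : IsFrontier dis P d B S X ↑Y)
    (hy : ystar ∈ Y) (hmin : ∀ y ∈ Y, d ystar ≤ d y) :
    d ystar = dis ystar ∧
      (insert B (Y.image d)).min' (Finset.insert_nonempty _ _) =
        (insert B (Y.image dis)).min' (Finset.insert_nonempty _ _) := by
  have hmin_d : IsMinOn d Y ystar := isMinOn_iff.2 hmin
  have hcomp : d ystar = dis ystar := hf.label_eq_dis_of_isMinOn hge hmono hYsub hy hmin_d
  have hmin_dis : IsMinOn dis Y ystar := isMinOn_iff.2 fun y hy' =>
    hcomp ▸ hf.le_dis_of_isMinOn hmono hYsub hmin_d hy'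
  refine ⟨hcomp, ?_⟩
  rw [Finset.min'_insert_image_of_isMinOn hy hmin_d,
    Finset.min'_insert_image_of_isMinOn hy hmin_dis, hcomp]

/-- If `(X, Y)` is a frontier for `Target(B, S)` and `Y` is nonempty with minimum
label below `B`, then the vertex attaining the minimum label in `Y` is complete;
consequently `d_B[Y] = dis_B(Y)`. -/
theorem min_label_complete {V : Type*} [DecidableEq V]
    (dis : V → ℝ) (P : V → V → Prop) (d : V → ℝ) (B : ℝ) (S X : Set V)
    (Y : Finset V) (ystar : V)
    (hge : ∀ v, dis v ≤ d v)
    (hmono : ∀ v u, P v u → dis u ≤ dis v)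
    (hYsub : ↑Y ⊆ Target dis P B S)
    (hXsub : X ⊆ Target dis P B S)
    (hf : IsFrontier dis P d B S X ↑Y)
    (hy : ystar ∈ Y) (hmin : ∀ y ∈ Y, d ystar ≤ d y) (hlt : d ystar < B) :
    d ystar = dis ystar ∧
      (insert B (Y.image d)).min' (Finset.insert_nonempty _ _) =
        (insert B (Y.image dis)).min' (Finset.insert_nonempty _ _) :=
  min_label_complete_general dis P d B S X Y ystar hge hmono hYsub hf hy hmin
end

section
/- Suppose (X, Y) is a frontier for Target(B, S), where Y ⊆ Target(B, S). Then Target(B, Y) ⊆ Target(B, S). -/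
theorem target_subset_general {V : Type*} (dis : V → ℝ) (P : V → V → Prop)
    (B : ℝ) (S Y : Set V)
    (Ptrans : ∀ v y u, P v y → P y u → P v u)
    (hY : Y ⊆ Target dis P B S) :
    Target dis P B Y ⊆ Target dis P B S := by
  rintro v ⟨hv, y, hyY, hvy⟩
  obtain ⟨-, u, huS, hyu⟩ := hY hyY
  exact ⟨hv, u, huS, Ptrans v y u hvy hyu⟩

/-- If `(X, Y)` is a frontier for `Target(B, S)` (so `Y ⊆ Target(B, S)`), then
`Target(B, Y) ⊆ Target(B, S)`.  `Ptrans` is the prefix property of canonical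
shortest paths. -/
theorem target_subset {V : Type*} (dis : V → ℝ) (P : V → V → Prop) (d : V → ℝ)
    (B : ℝ) (S X Y : Set V)
    (Ptrans : ∀ v y u, P v y → P y u → P v u)
    (hY : Y ⊆ Target dis P B S)
    (hf : IsFrontier dis P d B S X Y) :
    Target dis P B Y ⊆ Target dis P B S :=
  target_subset_general dis P B S Y Ptrans hY
end

section
/- Suppose (X, Y) is a frontier for Target(B, S). Then (∅, Y) is a frontier for Target(B, Y). -/
/-! `P v u` reads "the canonical shortest path of `v` visits `u`"; transitivity of `P` is the
prefix property. -/

section Frontier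

variable {V : Type*} {dis : V → ℝ} {P : V → V → Prop} {d : V → ℝ} {B : ℝ}

theorem target_subset_target_of_subset (Ptrans : ∀ v y u, P v y → P y u → P v u)
    {S Y : Set V} (hY : Y ⊆ Target dis P B S) :
    Target dis P B Y ⊆ Target dis P B S := by
  rintro v ⟨hvB, u, huY, hvu⟩
  obtain ⟨-, s, hsS, hus⟩ := hY huY
  exact ⟨hvB, s, hsS, Ptrans v u s hvu hus⟩

theorem IsFrontier.of_target_subset {S S' X Y : Set V}
    (hS : Target dis P B S' ⊆ Target dis P B S) (hf : IsFrontier dis P d B S X Y) :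
    IsFrontier dis P d B S' X Y :=
  fun v hv ↦ hf v (hS hv)

/-- A complete vertex of the target can be traded for the source it visits, which is then
complete as well. -/
theorem IsFrontier.empty_union (hprop : ∀ v y, d v = dis v → P v y → d y = dis y)
    {S X Y : Set V} (hf : IsFrontier dis P d B S X Y) :
    IsFrontier dis P d B S ∅ (S ∪ Y) := by
  intro v hv
  right
  rcases hf v hv with ⟨-, hvd⟩ | ⟨y, hyY, hvy, hyd⟩
  · obtain ⟨-, s, hsS, hvs⟩ := hv
    exact ⟨s, Or.inl hsS, hvs, hprop v s hvd hvs⟩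
  · exact ⟨y, Or.inr hyY, hvy, hyd⟩

end Frontier

theorem frontier_restrict_general {V : Type*} (dis : V → ℝ) (P : V → V → Prop) (d : V → ℝ)
    (B : ℝ) (S X Y : Set V)
    (Ptrans : ∀ v y u, P v y → P y u → P v u)
    (hprop : ∀ v y, d v = dis v → P v y → d y = dis y)
    (hY : Y ⊆ Target dis P B S)
    (hf : IsFrontier dis P d B S X Y) :
    IsFrontier dis P d B Y (∅ : Set V) Y := by
  have hfY : IsFrontier dis P d B Y X Y :=
    hf.of_target_subset (target_subset_target_of_subset Ptrans hY)
  simpa only [Set.union_self] using hfY.empty_union hprop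

/-- If `(X, Y)` is a frontier for `Target(B, S)`, then `(∅, Y)` is a frontier for
`Target(B, Y)`.  `Ptrans` is the prefix property; `hprop` says completeness
propagates to vertices visited by the shortest path of a complete vertex. -/
theorem frontier_restrict {V : Type*} (dis : V → ℝ) (P : V → V → Prop) (d : V → ℝ)
    (B : ℝ) (S X Y : Set V)
    (hge : ∀ v, dis v ≤ d v)
    (Ptrans : ∀ v y u, P v y → P y u → P v u)
    (hprop : ∀ v y, d v = dis v → P v y → d y = dis y)
    (hY : Y ⊆ Target dis P B S)
    (hf : IsFrontier dis P d B S X Y) :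
    IsFrontier dis P d B Y (∅ : Set V) Y :=
  frontier_restrict_general dis P d B S X Y Ptrans hprop hY hf
end

section
/- Suppose (X, Y) is a frontier for Target(B, S). Then Target(d_B[Y], S) ⊆ X, and every vertex of Target(d_B[Y], S) is complete. -/
theorem Target.mono {V : Type*} {dis : V → ℝ} {P : V → V → Prop} {B B' : ℝ} {S : Set V}
    (h : B ≤ B') : Target dis P B S ⊆ Target dis P B' S :=
  fun _ ⟨hlt, hS⟩ => ⟨hlt.trans_le h, hS⟩

theorem IsFrontier.complete_of_target_of_le {V : Type*} {dis : V → ℝ} {P : V → V → Prop}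
    {d : V → ℝ} {B B' : ℝ} {S X Y : Set V} (hf : IsFrontier dis P d B S X Y)
    (hmono : ∀ v u, P v u → dis u ≤ dis v) (hB : B' ≤ B) (hY : ∀ y ∈ Y, B' ≤ d y)
    {v : V} (hv : v ∈ Target dis P B' S) : v ∈ X ∧ d v = dis v := by
  rcases hf v (Target.mono hB hv) with hX | ⟨y, hy, hPy, hdy⟩
  · exact hX
  · exact absurd (calc
      d y = dis y := hdy
      _ ≤ dis v := hmono v y hPy
      _ < B' := hv.1
      _ ≤ d y := hY y hy) (lt_irrefl _)

theorem target_below_min_complete_general {V : Type*}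
    (dis : V → ℝ) (P : V → V → Prop) (d : V → ℝ) (B : ℝ) (S X : Set V)
    (Y : Finset V)
    (hmono : ∀ v u, P v u → dis u ≤ dis v)
    (hf : IsFrontier dis P d B S X ↑Y) :
    ∀ v ∈ Target dis P
        ((insert B (Y.image d)).min' (Finset.insert_nonempty _ _)) S,
      v ∈ X ∧ d v = dis v := by
  intro v hv
  refine hf.complete_of_target_of_le hmono ?_ (fun y hy => ?_) hv
  · exact Finset.min'_le _ _ (Finset.mem_insert_self _ _)
  · exact Finset.min'_le _ _ (Finset.mem_insert_of_mem (Finset.mem_image_of_mem d hy))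

/-- If `(X, Y)` is a frontier for `Target(B, S)` then, with
`B' = d_B[Y] = min({B} ∪ {d[x] : x ∈ Y})`, every vertex of `Target(B', S)` lies in
`X` and is complete. -/
theorem target_below_min_complete {V : Type*} [DecidableEq V]
    (dis : V → ℝ) (P : V → V → Prop) (d : V → ℝ) (B : ℝ) (S X : Set V)
    (Y : Finset V)
    (hge : ∀ v, dis v ≤ d v)
    (hmono : ∀ v u, P v u → dis u ≤ dis v)
    (hf : IsFrontier dis P d B S X ↑Y) :
    ∀ v ∈ Target dis P
        ((insert B (Y.image d)).min' (Finset.insert_nonempty _ _)) S,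
      v ∈ X ∧ d v = dis v :=
  target_below_min_complete_general dis P d B S X Y hmono hf
end

section
/- (Frontier Split) Suppose (X, Y) is a frontier for Target(B, S). Let B_s ≤ B and let Y_s satisfy {x ∈ Y : d[x] < B_s} ⊆ Y_s ⊆ Target(B, S). Then (∅, Y_s) is a frontier for Target(B_s, Y_s). -/
theorem frontier_split_general {V : Type*} (dis : V → ℝ) (P : V → V → Prop) (d : V → ℝ)
    (B Bs : ℝ) (S X Y Ys : Set V)
    (Ptrans : ∀ v y u, P v y → P y u → P v u)
    (hmono : ∀ v u, P v u → dis u ≤ dis v)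
    (hsub : {x ∈ Y | d x < Bs} ⊆ Ys)
    (hYs : Ys ⊆ Target dis P B S)
    (hf : IsFrontier dis P d B S X Y) :
    IsFrontier dis P d Bs Ys (∅ : Set V) Ys := by
  rintro v ⟨hvBs, u, huYs, hvu⟩
  right
  rcases hf u (hYs huYs) with ⟨-, hu⟩ | ⟨y, hyY, huy, hy⟩
  · exact ⟨u, huYs, hvu, hu⟩
  · have hyBs : d y < Bs :=
      calc d y = dis y := hy
        _ ≤ dis u := hmono u y huy
        _ ≤ dis v := hmono v u hvu
        _ < Bs := hvBs
    exact ⟨y, hsub ⟨hyY, hyBs⟩, Ptrans v u y hvu huy, hy⟩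

/-- Frontier Split: if `(X, Y)` is a frontier for `Target(B, S)`, `B_s ≤ B`, and
`{x ∈ Y : d[x] < B_s} ⊆ Y_s ⊆ Target(B, S)`, then `(∅, Y_s)` is a frontier for
`Target(B_s, Y_s)`. -/
theorem frontier_split {V : Type*} (dis : V → ℝ) (P : V → V → Prop) (d : V → ℝ)
    (B Bs : ℝ) (S X Y Ys : Set V)
    (hge : ∀ v, dis v ≤ d v)
    (Ptrans : ∀ v y u, P v y → P y u → P v u)
    (hmono : ∀ v u, P v u → dis u ≤ dis v)
    (hBs : Bs ≤ B)
    (hsub : {x ∈ Y | d x < Bs} ⊆ Ys)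
    (hYs : Ys ⊆ Target dis P B S)
    (hf : IsFrontier dis P d B S X Y) :
    IsFrontier dis P d Bs Ys (∅ : Set V) Ys :=
  frontier_split_general dis P d B Bs S X Y Ys Ptrans hmono hsub hYs hf
end

section
/- Let U be a finite vertex set partitioned into disjoint nonempty sets U_1, ..., U_f. Let F_1, ..., F_p be edge-disjoint subtrees (as undirected trees) whose vertex sets are contained in U. For each j, let g_j be the number of distinct indices i such that U_i contains at least one vertex of F_j that is charged (at most one charged vertex per (j, i) pair). Let 𝓔 be the set of edges of ∪_j F_j joining two vertices lying in different parts U_i. Then Σ_{j=1}^p g_j ≤ p + |𝓔|. -/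
/-!
Contracting each colour class of a connected graph yields a connected graph on the colours that
occur, and its edges are images of bichromatic edges; since a connected graph on `n` vertices has
at least `n - 1` edges, a connected graph sees at most one more colour than it has bichromatic
edges. Applied to each tree `F j` coloured by `part`, this gives `g j ≤ 1 + |𝓔 ∩ E(F j)|`, and the
edge-disjointness of the trees lets these bounds be summed.
-/

open Function

namespace SimpleGraph

variable {V W : Type*} {G : SimpleGraph V}

lemma Reachable.map_of_fun (f : V → W) {u v : V} (h : G.Reachable u v) :
    (G.map f).Reachable (f u) (f v) := by
  obtain ⟨p⟩ := h
  induction p with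
  | nil => rfl
  | @cons u w _ hadj _ ih =>
    by_cases huw : f u = f w
    · exact huw ▸ ih
    · exact (map_adj_apply' hadj huw).reachable.trans ih

lemma Connected.map_of_surjective (hG : G.Connected) {f : V → W} (hf : Surjective f) :
    (G.map f).Connected := by
  have := hG.nonempty.map f
  refine Connected.mk fun x y => ?_
  obtain ⟨u, rfl⟩ := hf x
  obtain ⟨v, rfl⟩ := hf y
  exact (hG u v).map_of_fun f

lemma edgeSet_map_subset_image (f : V → W) :
    (G.map f).edgeSet ⊆ Sym2.map f '' {e ∈ G.edgeSet | ¬(e.map f).IsDiag} := by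
  rintro ⟨x, y⟩ ⟨hxy, u, v, huv, rfl, rfl⟩
  exact ⟨s(u, v), ⟨huv, hxy⟩, rfl⟩

theorem Connected.ncard_range_le_ncard_add_one [Finite V] (hG : G.Connected) {α : Type*}
    (c : V → α) :
    (Set.range c).ncard ≤ {e ∈ G.edgeSet | ¬(e.map c).IsDiag}.ncard + 1 := by
  set c' := Set.rangeFactorization c
  have hbichrom : {e ∈ G.edgeSet | ¬(e.map c').IsDiag} = {e ∈ G.edgeSet | ¬(e.map c).IsDiag} := by
    ext e
    induction e
    simp [c', Set.rangeFactorization, Subtype.ext_iff]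
  calc (Set.range c).ncard = Nat.card (Set.range c) := rfl
    _ ≤ Nat.card (G.map c').edgeSet + 1 :=
      (hG.map_of_surjective Set.rangeFactorization_surjective).card_vert_le_card_edgeSet_add_one
    _ ≤ {e ∈ G.edgeSet | ¬(e.map c).IsDiag}.ncard + 1 := by
      rw [Nat.card_coe_set_eq, ← hbichrom]
      gcongr
      exact (Set.ncard_le_ncard (edgeSet_map_subset_image c')).trans
        (Set.ncard_image_le (Set.toFinite _))

lemma Subgraph.Connected.ncard_image_verts_le [Finite V] {H : G.Subgraph} (hH : H.Connected)
    {α : Type*} (c : V → α) :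
    (c '' H.verts).ncard ≤ {e ∈ H.edgeSet | ¬(e.map c).IsDiag}.ncard + 1 := by
  have hcoe := hH.coe.ncard_range_le_ncard_add_one (c ∘ Subtype.val)
  rw [Set.range_comp, Subtype.range_coe] at hcoe
  refine hcoe.trans (Nat.add_le_add_right ?_ 1)
  refine Set.ncard_le_ncard_of_injOn (Sym2.map Subtype.val) ?_
    (Sym2.map.injective Subtype.val_injective).injOn (Set.toFinite _)
  rintro ⟨u, v⟩ ⟨huv, hbichrom⟩
  exact ⟨huv, by simpa using hbichrom⟩

end SimpleGraph

theorem Sym2.not_isDiag_map_iff {α β : Type*} (f : α → β) (e : Sym2 α) :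
    ¬(e.map f).IsDiag ↔ ∃ a b, e = s(a, b) ∧ f a ≠ f b := by
  induction e with
  | _ a b =>
    refine ⟨fun h => ⟨a, b, rfl, by simpa using h⟩, ?_⟩
    rintro ⟨x, y, hxy, hne⟩
    rcases Sym2.eq_iff.mp hxy with ⟨rfl, rfl⟩ | ⟨rfl, rfl⟩ <;> simpa [eq_comm] using hne

theorem charged_parts_bound_general {V : Type*} [Fintype V] {f p : ℕ}
    (G : SimpleGraph V) (F : Fin p → G.Subgraph)
    (htree : ∀ j, (F j).coe.IsTree)
    (hdisj : ∀ j j', j ≠ j' → Disjoint (F j).edgeSet (F j').edgeSet)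
    (part : V → Fin f)
    (ch : Fin p → V → Prop)
    (g : Fin p → ℕ)
    (hg : ∀ j, g j = {i : Fin f | ∃ v ∈ (F j).verts, ch j v ∧ part v = i}.ncard)
    (𝓔 : Set (Sym2 V))
    (h𝓔 : 𝓔 = {e | (∃ j, e ∈ (F j).edgeSet) ∧ ∃ a b, e = s(a, b) ∧ part a ≠ part b}) :
    ∑ j, g j ≤ p + 𝓔.ncard := by
  set B : Fin p → Set (Sym2 V) := fun j => {e ∈ (F j).edgeSet | ¬(e.map part).IsDiag}
  have hg_le : ∀ j, g j ≤ (B j).ncard + 1 := fun j => by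
    rw [hg j]
    refine (Set.ncard_le_ncard ?_ (Set.toFinite _)).trans
      (SimpleGraph.Subgraph.Connected.ncard_image_verts_le ⟨(htree j).connected⟩ part)
    rintro i ⟨v, hv, -, rfl⟩
    exact ⟨v, hv, rfl⟩
  have h𝓔B : 𝓔 = ⋃ j, B j := by
    ext e
    simp [h𝓔, B, Sym2.not_isDiag_map_iff]
  have h𝓔card : 𝓔.ncard = ∑ j, (B j).ncard := by
    rw [h𝓔B, Set.ncard_iUnion_of_finite (fun _ => Set.toFinite _), finsum_eq_sum_of_fintype]
    exact fun j j' hjj' => (hdisj j j' hjj').mono (fun _ he => he.1) (fun _ he => he.1)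
  calc ∑ j, g j ≤ ∑ j, ((B j).ncard + 1) := Finset.sum_le_sum fun j _ => hg_le j
    _ = p + 𝓔.ncard := by simp [Finset.sum_add_distrib, h𝓔card, add_comm]

/-- Let the vertex set be partitioned by `part : V → Fin f`, let `F₁, …, F_p` be
edge-disjoint subtrees, let `g j` be the number of parts containing a charged
vertex of `F j` (at most one charged vertex per pair), and let `𝓔` be the set of
edges of `⋃ F j` joining two different parts.  Then `Σ g j ≤ p + |𝓔|`. -/
theorem charged_parts_bound {V : Type*} [Fintype V] {f p : ℕ}
    (G : SimpleGraph V) (F : Fin p → G.Subgraph)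
    (htree : ∀ j, (F j).coe.IsTree)
    (hdisj : ∀ j j', j ≠ j' → Disjoint (F j).edgeSet (F j').edgeSet)
    (part : V → Fin f)
    (ch : Fin p → V → Prop)
    (hch : ∀ j, ∀ v ∈ (F j).verts, ∀ v' ∈ (F j).verts,
      ch j v → ch j v' → part v = part v' → v = v')
    (g : Fin p → ℕ)
    (hg : ∀ j, g j = {i : Fin f | ∃ v ∈ (F j).verts, ch j v ∧ part v = i}.ncard)
    (𝓔 : Set (Sym2 V))
    (h𝓔 : 𝓔 = {e | (∃ j, e ∈ (F j).edgeSet) ∧ ∃ a b, e = s(a, b) ∧ part a ≠ part b}) :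
    ∑ j, g j ≤ p + 𝓔.ncard :=
  charged_parts_bound_general G F htree hdisj part ch g hg 𝓔 h𝓔
end
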